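/- arXiv:2403.16391 — 6 statements merged into one kernel-verified Lean document; each statement's English description precedes it below -/
import Mathlib

section
/- (Safe-trajectory case of Proposition 1.) If x_j ∈ C for every j ∈ {0, …, N}, then the total return of the augmented trajectory equals one: Σ_{k=0}^∞ r(S_k) = 1 (the series has exactly one nonzero term, at k = N). -/
open scoped Classical

/-- A pair `(h, y)` is absorbing iff `h < 0` or `y ∉ C`. -/
def IsAbsorbing {𝒳 : Type*} (C : Set 𝒳) (s : ℝ × 𝒳) : Prop :=
  s.1 < 0 ∨ s.2 ∉ C

/-- Reward: `1` if `0 ≤ h < Δt` and `(h, y)` is not absorbing, else `0`. -/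
noncomputable def reward {𝒳 : Type*} (C : Set 𝒳) (Δt : ℝ) (s : ℝ × 𝒳) : ℝ :=
  if 0 ≤ s.1 ∧ s.1 < Δt ∧ ¬ IsAbsorbing C s then 1 else 0

/-- The augmented trajectory built from a realized trajectory `x`. -/
noncomputable def augTraj {𝒳 : Type*} (C : Set 𝒳) (Δt τ : ℝ) (x : ℕ → 𝒳) : ℕ → ℝ × 𝒳
  | 0 => (τ, x 0)
  | k + 1 =>
      if IsAbsorbing C (augTraj C Δt τ x k) then augTraj C Δt τ x k
      else ((augTraj C Δt τ x k).1 - Δt, x (k + 1))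

/-- safe-trajectory case of Proposition 1: if `x j ∈ C` for all
`j ∈ {0, …, N}` with `N = ⌊τ/Δt⌋`, the total return equals `1`. -/
theorem stmt_1 {𝒳 : Type*} (C : Set 𝒳) (Δt τ : ℝ) (hΔt : 0 < Δt) (hτ : 0 ≤ τ)
    (x : ℕ → 𝒳) (hsafe : ∀ j ≤ ⌊τ / Δt⌋₊, x j ∈ C) :
    ∑' k : ℕ, reward C Δt (augTraj C Δt τ x k) = 1 := by
  set N := ⌊τ / Δt⌋₊ with hN
  have h1 : (N : ℝ) * Δt ≤ τ := by
    rw [← le_div_iff₀ hΔt]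
    exact Nat.floor_le (div_nonneg hτ hΔt.le)
  have h2 : τ < ((N : ℝ) + 1) * Δt := by
    rw [← div_lt_iff₀ hΔt]
    exact Nat.lt_floor_add_one _
  have key : ∀ k ≤ N, augTraj C Δt τ x k = (τ - k * Δt, x k) := by
    intro k
    induction k with
    | zero => intro _; simp [augTraj]
    | succ k ih =>
      intro hk
      have hk' : k ≤ N := Nat.le_of_succ_le hk
      have hkr : (k : ℝ) ≤ N := Nat.cast_le.mpr hk'
      have hna : ¬ IsAbsorbing C (τ - k * Δt, x k) := by
        simp only [IsAbsorbing, not_or, not_lt, not_not]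
        refine ⟨by nlinarith, hsafe k hk'⟩
      rw [augTraj, ih hk', if_neg hna]
      refine Prod.ext ?_ rfl
      push_cast
      ring
  have habs : ∀ k, N < k → IsAbsorbing C (augTraj C Δt τ x k) := by
    intro k hk
    induction k with
    | zero => omega
    | succ k ih =>
      rcases Nat.lt_or_ge N k with h | h
      · have := ih h
        rw [augTraj, if_pos this]
        exact this
      · have hkN : k = N := by omega
        have hna : ¬ IsAbsorbing C (augTraj C Δt τ x k) := by
          rw [key k hkN.le]
          simp only [IsAbsorbing, not_or, not_lt, not_not]
          refine ⟨?_, hsafe k hkN.le⟩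
          rw [hkN]
          nlinarith
        rw [augTraj, if_neg hna, key k hkN.le]
        left
        simp only [hkN]
        nlinarith
  rw [tsum_eq_single N]
  · have hcond : 0 ≤ τ - (N : ℝ) * Δt ∧ τ - (N : ℝ) * Δt < Δt ∧
        ¬ IsAbsorbing C ((τ - (N : ℝ) * Δt, x N) : ℝ × 𝒳) := by
      refine ⟨by nlinarith, by nlinarith, ?_⟩
      simp only [IsAbsorbing, not_or, not_lt, not_not]
      exact ⟨by nlinarith, hsafe N le_rfl⟩
    rw [key N le_rfl, reward, if_pos hcond]
  · intro k hk
    rcases lt_or_gt_of_ne hk with h | h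
    · rw [key k h.le, reward, if_neg]
      rintro ⟨-, hlt, -⟩
      have hkr : (k : ℝ) + 1 ≤ N := by exact_mod_cast h
      simp only at hlt
      nlinarith
    · rw [reward, if_neg]
      intro ⟨_, _, hna⟩
      exact hna (habs k h)
end

section
/- (Unsafe-trajectory case of Proposition 1.) If there exists k̄ ∈ {0, …, N} with x_{k̄} ∉ C, then every reward along the augmented trajectory vanishes, so the total return is zero: Σ_{k=0}^∞ r(S_k) = 0. -/
/-
A nonzero reward at step `k` forces the state `S_k` to be non-absorbing with `0 ≤ τ - kΔt < Δt`,
so `τ/Δt < k + 1` and hence `k̄ ≤ ⌊τ/Δt⌋ ≤ k`. Absorption is permanent, hence `S_k̄` is non-absorbing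
as well; but `S_k̄ = (τ - k̄Δt, x_k̄)` with `x_k̄ ∉ C`, which is absorbing.
-/

open scoped Classical

section AugTraj

variable {𝒳 : Type*} {C : Set 𝒳} {Δt τ : ℝ} {x : ℕ → 𝒳} {k : ℕ}

theorem augTraj_succ_of_isAbsorbing (h : IsAbsorbing C (augTraj C Δt τ x k)) :
    augTraj C Δt τ x (k + 1) = augTraj C Δt τ x k := by
  rw [augTraj, if_pos h]

theorem augTraj_succ_of_not_isAbsorbing (h : ¬ IsAbsorbing C (augTraj C Δt τ x k)) :
    augTraj C Δt τ x (k + 1) = ((augTraj C Δt τ x k).1 - Δt, x (k + 1)) := by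
  rw [augTraj, if_neg h]

theorem monotone_isAbsorbing_augTraj :
    Monotone fun k ↦ IsAbsorbing C (augTraj C Δt τ x k) :=
  monotone_nat_of_le_succ fun k h ↦ by rwa [augTraj_succ_of_isAbsorbing h]

theorem augTraj_eq_of_not_isAbsorbing (h : ¬ IsAbsorbing C (augTraj C Δt τ x k)) :
    augTraj C Δt τ x k = (τ - k * Δt, x k) := by
  induction k with
  | zero => simp [augTraj]
  | succ k ih =>
    have hk : ¬ IsAbsorbing C (augTraj C Δt τ x k) :=
      fun hk ↦ h (monotone_isAbsorbing_augTraj k.le_succ hk)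
    rw [augTraj_succ_of_not_isAbsorbing hk, ih hk]
    push_cast
    ring_nf

theorem reward_augTraj_eq_zero {kbar : ℕ} (hkbar : kbar ≤ ⌊τ / Δt⌋₊) (hx : x kbar ∉ C) (k : ℕ) :
    reward C Δt (augTraj C Δt τ x k) = 0 := by
  rw [reward, if_neg]
  rintro ⟨h_nonneg, h_lt, h_safe⟩
  rw [augTraj_eq_of_not_isAbsorbing h_safe] at h_nonneg h_lt
  have hΔt : 0 < Δt := h_nonneg.trans_lt h_lt
  have h_floor : ⌊τ / Δt⌋₊ < k + 1 := by
    rw [Nat.floor_lt' k.succ_ne_zero, div_lt_iff₀ hΔt]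
    push_cast
    linarith
  have h_safe_kbar : ¬ IsAbsorbing C (augTraj C Δt τ x kbar) :=
    fun h ↦ h_safe (monotone_isAbsorbing_augTraj (by omega) h)
  rw [augTraj_eq_of_not_isAbsorbing h_safe_kbar] at h_safe_kbar
  exact h_safe_kbar (Or.inr hx)

end AugTraj

theorem stmt_2_general {𝒳 : Type*} (C : Set 𝒳) (Δt τ : ℝ)
    (x : ℕ → 𝒳) (hunsafe : ∃ kbar ≤ ⌊τ / Δt⌋₊, x kbar ∉ C) :
    (∀ k : ℕ, reward C Δt (augTraj C Δt τ x k) = 0) ∧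
      ∑' k : ℕ, reward C Δt (augTraj C Δt τ x k) = 0 := by
  obtain ⟨kbar, hkbar, hx⟩ := hunsafe
  have h_zero := reward_augTraj_eq_zero hkbar hx
  exact ⟨h_zero, by simp only [h_zero, tsum_zero]⟩

/-- unsafe-trajectory case of Proposition 1: if `x k̄ ∉ C` for
some `k̄ ∈ {0, …, N}` with `N = ⌊τ/Δt⌋`, then every reward vanishes and the
total return is `0`. -/
theorem stmt_2 {𝒳 : Type*} (C : Set 𝒳) (Δt τ : ℝ) (hΔt : 0 < Δt) (hτ : 0 ≤ τ)
    (x : ℕ → 𝒳) (hunsafe : ∃ kbar ≤ ⌊τ / Δt⌋₊, x kbar ∉ C) :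
    (∀ k : ℕ, reward C Δt (augTraj C Δt τ x k) = 0) ∧
      ∑' k : ℕ, reward C Δt (augTraj C Δt τ x k) = 0 :=
  stmt_2_general C Δt τ x hunsafe
end

section
/- (Pathwise form of Proposition 1.) The total return of the augmented trajectory equals the product of safety indicators along the original trajectory up to step N: Σ_{k=0}^∞ r(S_k) = ∏_{j=0}^{N} 𝟙[x_j ∈ C]. In particular the total return takes only the values 0 or 1. -/
open scoped Classical

/-!
Until the trajectory is absorbed it simply reads off `(τ - k Δt, x k)`, and once absorbed it stays
put and earns nothing. So the reward at step `k` is `1` exactly when `τ - k Δt ∈ [0, Δt)`, i.e.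
`k = ⌊τ/Δt⌋`, and no absorbing pair has been met before, i.e. `x j ∈ C` for all `j ≤ ⌊τ/Δt⌋`.
The total return is therefore a single indicator, which is the product of the safety indicators.
-/

lemma floor_div_eq_iff_sub_mul_mem_Ico {Δt τ : ℝ} (hΔt : 0 < Δt) (hτ : 0 ≤ τ) (k : ℕ) :
    ⌊τ / Δt⌋₊ = k ↔ τ - k * Δt ∈ Set.Ico 0 Δt := by
  rw [Nat.floor_eq_iff (div_nonneg hτ hΔt.le), le_div_iff₀ hΔt, div_lt_iff₀ hΔt, Set.mem_Ico]
  constructor <;> rintro ⟨h₁, h₂⟩ <;> constructor <;> linarith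

section augTraj

variable {𝒳 : Type*} (C : Set 𝒳) (Δt τ : ℝ) (x : ℕ → 𝒳)

lemma augTraj_eq_of_isAbsorbing {k : ℕ} (hk : IsAbsorbing C (augTraj C Δt τ x k)) :
    ∀ m, k ≤ m → augTraj C Δt τ x m = augTraj C Δt τ x k := by
  intro m hm
  induction m, hm using Nat.le_induction with
  | base => rfl
  | succ m _ ih => rw [augTraj, ih, if_pos hk]

lemma augTraj_eq_of_forall_lt {k : ℕ}
    (hk : ∀ j < k, ¬IsAbsorbing C ((τ - j * Δt, x j) : ℝ × 𝒳)) :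
    augTraj C Δt τ x k = (τ - k * Δt, x k) := by
  induction k with
  | zero => simp [augTraj]
  | succ k ih =>
    have hprev := ih fun j hj => hk j (Nat.lt_succ_of_lt hj)
    rw [augTraj, hprev, if_neg (hk k k.lt_succ_self)]
    push_cast
    ring_nf

lemma not_isAbsorbing_augTraj_iff (k : ℕ) :
    ¬IsAbsorbing C (augTraj C Δt τ x k) ↔
      ∀ j ≤ k, ¬IsAbsorbing C ((τ - j * Δt, x j) : ℝ × 𝒳) := by
  constructor
  · intro hk j
    induction j using Nat.strong_induction_on with
    | _ j ih =>
      intro hj habs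
      have hval := augTraj_eq_of_forall_lt C Δt τ x fun i hi => ih i hi (hi.le.trans hj)
      rw [← hval] at habs
      exact hk (augTraj_eq_of_isAbsorbing C Δt τ x habs k hj ▸ habs)
  · intro h
    rw [augTraj_eq_of_forall_lt C Δt τ x fun j hj => h j hj.le]
    exact h k le_rfl

end augTraj

lemma reward_augTraj {𝒳 : Type*} (C : Set 𝒳) (x : ℕ → 𝒳) {Δt τ : ℝ} (hΔt : 0 < Δt)
    (hτ : 0 ≤ τ) (k : ℕ) :
    reward C Δt (augTraj C Δt τ x k) =
      if k = ⌊τ / Δt⌋₊ ∧ ∀ j ≤ ⌊τ / Δt⌋₊, x j ∈ C then 1 else 0 := by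
  refine if_congr ?_ rfl rfl
  constructor
  · rintro ⟨h₀, hΔ, hk⟩
    rw [augTraj_eq_of_forall_lt C Δt τ x fun j hj =>
      (not_isAbsorbing_augTraj_iff C Δt τ x k).mp hk j hj.le] at h₀ hΔ
    obtain rfl : ⌊τ / Δt⌋₊ = k := (floor_div_eq_iff_sub_mul_mem_Ico hΔt hτ k).mpr ⟨h₀, hΔ⟩
    refine ⟨rfl, fun j hj => ?_⟩
    have := (not_isAbsorbing_augTraj_iff C Δt τ x _).mp hk j hj
    exact of_not_not (not_or.mp this).2
  · rintro ⟨rfl, hC⟩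
    obtain ⟨h₀, hΔ⟩ := (floor_div_eq_iff_sub_mul_mem_Ico hΔt hτ _).mp rfl
    have hsafe : ∀ j ≤ ⌊τ / Δt⌋₊, ¬IsAbsorbing C ((τ - j * Δt, x j) : ℝ × 𝒳) := by
      rintro j hj (hneg | hout)
      · have : (j : ℝ) * Δt ≤ ⌊τ / Δt⌋₊ * Δt := by gcongr
        change τ - j * Δt < 0 at hneg
        linarith
      · exact hout (hC j hj)
    rw [augTraj_eq_of_forall_lt C Δt τ x fun j hj => hsafe j hj.le]
    exact ⟨h₀, hΔ, hsafe _ le_rfl⟩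

/-- pathwise form of Proposition 1: the total return equals the
product of the safety indicators `𝟙[x j ∈ C]` for `j = 0, …, N`, with
`N = ⌊τ/Δt⌋`; in particular it is `0` or `1`. -/
theorem stmt_3 {𝒳 : Type*} (C : Set 𝒳) (Δt τ : ℝ) (hΔt : 0 < Δt) (hτ : 0 ≤ τ)
    (x : ℕ → 𝒳) :
    (∑' k : ℕ, reward C Δt (augTraj C Δt τ x k) =
      ∏ j ∈ Finset.range (⌊τ / Δt⌋₊ + 1), (if x j ∈ C then (1 : ℝ) else 0)) ∧
    (∑' k : ℕ, reward C Δt (augTraj C Δt τ x k) = 0 ∨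
      ∑' k : ℕ, reward C Δt (augTraj C Δt τ x k) = 1) := by
  have hsum : ∑' k : ℕ, reward C Δt (augTraj C Δt τ x k) =
      if ∀ j ≤ ⌊τ / Δt⌋₊, x j ∈ C then 1 else 0 := by
    simp_rw [reward_augTraj C x hΔt hτ, ite_and]
    exact tsum_ite_eq _ _
  have hprod : ∏ j ∈ Finset.range (⌊τ / Δt⌋₊ + 1), (if x j ∈ C then (1 : ℝ) else 0) =
      if ∀ j ≤ ⌊τ / Δt⌋₊, x j ∈ C then 1 else 0 := by
    simp only [Finset.prod_boole, Finset.mem_range, Nat.lt_succ_iff]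
  rw [hsum, hprod]
  exact ⟨rfl, by split_ifs <;> simp⟩
end

section
/- (Pathwise identity for the ε-mollified return, used in the proof of Theorem 1.) With the ε-mollified reward r_ε(h, y) := 𝟙[0 ≤ h < Δt] · 𝟙[(h,y) not absorbing] · l_ε(y), the total mollified return of the augmented trajectory equals the product of safety indicators times the mollified terminal payoff: Σ_{k=0}^∞ r_ε(S_k) = ( ∏_{j=0}^{N} 𝟙[x_j ∈ C] ) · l_ε(x_N). -/
/-! Before absorption the augmented trajectory is the unstopped state `(τ - k Δt, x k)`, and
after it the state is frozen at an absorbing state, where the reward vanishes. The clock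
`τ - k Δt` lies in `[0, Δt)` exactly for `k = N`, so only the `N`-th term of the return
survives, and it is nonzero only if none of `(τ - j Δt, x j)`, `j ≤ N`, is absorbing, i.e.
(the clock being nonnegative) only if `x j ∈ C` for all `j ≤ N`. -/

open scoped Classical

open Metric

/-- The shrunk safe set `C_ε = {x ∈ C : dist(x, Cᶜ) ≥ ε}`. -/
def shrunkSet {𝒳 : Type*} [MetricSpace 𝒳] (C : Set 𝒳) (ε : ℝ) : Set 𝒳 :=
  {x ∈ C | ε ≤ infDist x Cᶜ}

/-- The mollified payoff `l_ε(x) = max{1 - dist(x, C_ε)/ε, 0}`. -/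
noncomputable def molPayoff {𝒳 : Type*} [MetricSpace 𝒳] (C : Set 𝒳) (ε : ℝ) (x : 𝒳) : ℝ :=
  max (1 - infDist x (shrunkSet C ε) / ε) 0

/-- The ε-mollified reward `r_ε(h,y) = 𝟙[0 ≤ h < Δt]·𝟙[(h,y) not absorbing]·l_ε(y)`. -/
noncomputable def rewardEps {𝒳 : Type*} [MetricSpace 𝒳] (C : Set 𝒳) (Δt ε : ℝ)
    (s : ℝ × 𝒳) : ℝ :=
  (if 0 ≤ s.1 ∧ s.1 < Δt then (1 : ℝ) else 0) *
    (if ¬ IsAbsorbing C s then (1 : ℝ) else 0) * molPayoff C ε s.2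

section AugmentedTrajectory

variable {𝒳 : Type*} (C : Set 𝒳) (Δt τ : ℝ) (x : ℕ → 𝒳)

theorem augTraj_eq_of_forall_lt_not_isAbsorbing {k : ℕ}
    (h : ∀ j < k, ¬ IsAbsorbing C (τ - j * Δt, x j)) :
    augTraj C Δt τ x k = (τ - k * Δt, x k) := by
  induction k with
  | zero => simp [augTraj]
  | succ k ih =>
    rw [augTraj, ih fun j hj => h j (hj.trans k.lt_succ_self), if_neg (h k k.lt_succ_self)]
    push_cast
    congr 1
    ring

theorem isAbsorbing_augTraj {j k : ℕ} (hjk : j ≤ k) (hj : IsAbsorbing C (τ - j * Δt, x j)) :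
    IsAbsorbing C (augTraj C Δt τ x k) := by
  induction k generalizing j with
  | zero =>
    obtain rfl := Nat.le_zero.mp hjk
    simpa [augTraj] using hj
  | succ k ih =>
    by_cases hk : IsAbsorbing C (augTraj C Δt τ x k)
    · rwa [augTraj, if_pos hk]
    have alive : ∀ i ≤ k, ¬ IsAbsorbing C (τ - i * Δt, x i) := fun i hi hi' => hk (ih hi hi')
    rcases Nat.le_succ_iff.mp hjk with hjk | rfl
    · exact absurd hj (alive j hjk)
    · rwa [augTraj_eq_of_forall_lt_not_isAbsorbing C Δt τ x
        fun i hi => alive i (Nat.lt_succ_iff.mp hi)]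

end AugmentedTrajectory

section MollifiedReward

variable {𝒳 : Type*} [MetricSpace 𝒳] (C : Set 𝒳) (Δt ε : ℝ)

theorem rewardEps_of_isAbsorbing {s : ℝ × 𝒳} (h : IsAbsorbing C s) : rewardEps C Δt ε s = 0 := by
  simp [rewardEps, h]

theorem rewardEps_augTraj (τ : ℝ) (x : ℕ → 𝒳) (k : ℕ) :
    rewardEps C Δt ε (augTraj C Δt τ x k) =
      if ∀ j < k, ¬ IsAbsorbing C (τ - j * Δt, x j) then rewardEps C Δt ε (τ - k * Δt, x k)
      else 0 := by
  split_ifs with h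
  · rw [augTraj_eq_of_forall_lt_not_isAbsorbing C Δt τ x h]
  · push Not at h
    obtain ⟨j, hjk, hj⟩ := h
    exact rewardEps_of_isAbsorbing C Δt ε (isAbsorbing_augTraj C Δt τ x hjk.le hj)

theorem rewardEps_of_mem_Ico {h : ℝ} (hh : 0 ≤ h ∧ h < Δt) (y : 𝒳) :
    rewardEps C Δt ε (h, y) = (if y ∈ C then 1 else 0) * molPayoff C ε y := by
  simp [rewardEps, IsAbsorbing, hh, hh.1.not_gt]

theorem rewardEps_of_not_mem_Ico {h : ℝ} (hh : ¬ (0 ≤ h ∧ h < Δt)) (y : 𝒳) :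
    rewardEps C Δt ε (h, y) = 0 := by
  simp [rewardEps, hh]

end MollifiedReward

theorem sub_nat_mul_mem_Ico_iff {Δt τ : ℝ} (hΔt : 0 < Δt) (hτ : 0 ≤ τ) (k : ℕ) :
    (0 ≤ τ - k * Δt ∧ τ - k * Δt < Δt) ↔ k = ⌊τ / Δt⌋₊ := by
  rw [eq_comm, Nat.floor_eq_iff (div_nonneg hτ hΔt.le), le_div_iff₀ hΔt, div_lt_iff₀ hΔt]
  constructor <;> rintro ⟨h₁, h₂⟩ <;> constructor <;> linarith

theorem stmt_12_general {𝒳 : Type*} [MetricSpace 𝒳] (C : Set 𝒳) (Δt τ ε : ℝ)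
    (hΔt : 0 < Δt) (hτ : 0 ≤ τ) (x : ℕ → 𝒳) :
    ∑' k : ℕ, rewardEps C Δt ε (augTraj C Δt τ x k) =
      (∏ j ∈ Finset.range (⌊τ / Δt⌋₊ + 1), (if x j ∈ C then (1 : ℝ) else 0)) *
        molPayoff C ε (x ⌊τ / Δt⌋₊) := by
  set N := ⌊τ / Δt⌋₊
  have hN := (sub_nat_mul_mem_Ico_iff hΔt hτ N).mpr rfl
  have h_clock_nonneg : ∀ j ≤ N, 0 ≤ τ - j * Δt := fun j hj => by
    have : (j : ℝ) * Δt ≤ N * Δt := by gcongr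
    linarith [hN.1]
  have h_absorbing_iff : ∀ j ≤ N, IsAbsorbing C (τ - j * Δt, x j) ↔ x j ∉ C := fun j hj => by
    simp [IsAbsorbing, (h_clock_nonneg j hj).not_gt]
  rw [tsum_eq_single N fun k hk => by
    rw [rewardEps_augTraj, rewardEps_of_not_mem_Ico C Δt ε
      (mt (sub_nat_mul_mem_Ico_iff hΔt hτ k).mp hk), ite_self]]
  rw [rewardEps_augTraj, rewardEps_of_mem_Ico C Δt ε hN, Finset.prod_range_succ,
    Finset.prod_boole]
  have h_alive :
      (∀ j < N, ¬ IsAbsorbing C (τ - j * Δt, x j)) ↔ ∀ j ∈ Finset.range N, x j ∈ C := by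
    simp only [Finset.mem_range]
    exact forall₂_congr fun j hj => by rw [h_absorbing_iff j hj.le, not_not]
  simp only [h_alive, ite_mul, one_mul, zero_mul]

/-- pathwise identity for the ε-mollified return: the total
mollified return equals the product of safety indicators times the mollified
terminal payoff `l_ε(x_N)`, where `N = ⌊τ/Δt⌋`. -/
theorem stmt_12 {𝒳 : Type*} [MetricSpace 𝒳] (C : Set 𝒳) (Δt τ ε : ℝ)
    (hΔt : 0 < Δt) (hτ : 0 ≤ τ) (hε : 0 < ε) (x : ℕ → 𝒳) :
    ∑' k : ℕ, rewardEps C Δt ε (augTraj C Δt τ x k) =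
      (∏ j ∈ Finset.range (⌊τ / Δt⌋₊ + 1), (if x j ∈ C then (1 : ℝ) else 0)) *
        molPayoff C ε (x ⌊τ / Δt⌋₊) :=
  stmt_12_general C Δt τ ε hΔt hτ x
end

section
/- (Single-step selection of the reward.) Along the augmented trajectory with τ ≥ 0, the reward r(S_k) is nonzero for at most one index k, namely k = N = ⌊τ/Δt⌋; i.e., r(S_k) = 0 for all k ≠ N, and consequently Σ_{k=0}^∞ r(S_k) = r(S_N). -/
open scoped Classical

section

variable {𝒳 : Type*} (C : Set 𝒳) {Δt τ : ℝ} (x : ℕ → 𝒳)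

lemma augTraj_fst_of_not_isAbsorbing {k : ℕ} (hk : ¬ IsAbsorbing C (augTraj C Δt τ x k)) :
    (augTraj C Δt τ x k).1 = τ - k * Δt := by
  induction k with
  | zero => simp [augTraj]
  | succ k ih =>
    -- absorbing states are fixed points of the recursion
    have hprev : ¬ IsAbsorbing C (augTraj C Δt τ x k) := fun habs => by
      simp only [augTraj, if_pos habs] at hk
      exact hk habs
    simp only [augTraj, if_neg hprev, ih hprev]
    push_cast
    ring

lemma eq_floor_of_reward_augTraj_ne_zero (hΔt : 0 < Δt) {k : ℕ}
    (hk : reward C Δt (augTraj C Δt τ x k) ≠ 0) : k = ⌊τ / Δt⌋₊ := by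
  obtain ⟨h0, hlt, hna⟩ : 0 ≤ (augTraj C Δt τ x k).1 ∧ (augTraj C Δt τ x k).1 < Δt ∧
      ¬ IsAbsorbing C (augTraj C Δt τ x k) := by
    by_contra h
    exact hk (if_neg h)
  rw [augTraj_fst_of_not_isAbsorbing C x hna] at h0 hlt
  have hk_le : (k : ℝ) ≤ τ / Δt := by rw [le_div_iff₀ hΔt]; linarith
  refine ((Nat.floor_eq_iff ((Nat.cast_nonneg k).trans hk_le)).2 ⟨hk_le, ?_⟩).symm
  rw [div_lt_iff₀ hΔt]
  linarith

end

theorem stmt_16_general {𝒳 : Type*} (C : Set 𝒳) (Δt τ : ℝ) (hΔt : 0 < Δt)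
    (x : ℕ → 𝒳) :
    (∀ k : ℕ, k ≠ ⌊τ / Δt⌋₊ → reward C Δt (augTraj C Δt τ x k) = 0) ∧
    ∑' k : ℕ, reward C Δt (augTraj C Δt τ x k) =
      reward C Δt (augTraj C Δt τ x ⌊τ / Δt⌋₊) := by
  have hvanish : ∀ k : ℕ, k ≠ ⌊τ / Δt⌋₊ → reward C Δt (augTraj C Δt τ x k) = 0 :=
    fun k hk => by_contra fun hne => hk (eq_floor_of_reward_augTraj_ne_zero C x hΔt hne)
  exact ⟨hvanish, tsum_eq_single _ hvanish⟩

/-- single-step selection of the reward: for `τ ≥ 0` the reward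
vanishes at every step `k ≠ N = ⌊τ/Δt⌋`, and the total return equals the
reward at step `N`. -/
theorem stmt_16 {𝒳 : Type*} (C : Set 𝒳) (Δt τ : ℝ) (hΔt : 0 < Δt) (hτ : 0 ≤ τ)
    (x : ℕ → 𝒳) :
    (∀ k : ℕ, k ≠ ⌊τ / Δt⌋₊ → reward C Δt (augTraj C Δt τ x k) = 0) ∧
    ∑' k : ℕ, reward C Δt (augTraj C Δt τ x k) =
      reward C Δt (augTraj C Δt τ x ⌊τ / Δt⌋₊) :=
  stmt_16_general C Δt τ hΔt x
end

section
/- (ε-mollified expectation identity, the ε-analogue of Proposition 1 used in the proof of Theorem 1.) Assume l_ε is Borel measurable (e.g. continuous) and C is Borel. Then E[ Σ_{k=0}^∞ r_ε(S_k) ] = E[ ( ∏_{k=0}^{N} 𝟙[X_k ∈ C] ) · l_ε(X_N) ], where for each sample path ω the augmented trajectory S_k(ω) is built from the realized trajectory k ↦ X_k(ω); i.e., v^u_ε(s) = Ψ^u_ε(τ, x) in the paper's notation. -/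
open scoped Classical

open Metric

open MeasureTheory

/-- If no absorption has occurred strictly before step `k`, the augmented
trajectory at step `k` has the explicit form `(τ - k·Δt, x k)`. -/
lemma augTraj_eq_of_not_absorbing {𝒳 : Type*} (C : Set 𝒳) (Δt τ : ℝ) (x : ℕ → 𝒳) :
    ∀ k, (∀ j < k, ¬ IsAbsorbing C (augTraj C Δt τ x j)) →
      augTraj C Δt τ x k = (τ - k * Δt, x k) := by
  intro k
  induction k with
  | zero => intro _; simp [augTraj]
  | succ k ih =>
      intro h
      have hk : augTraj C Δt τ x k = (τ - k * Δt, x k) :=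
        ih fun j hj => h j (hj.trans (Nat.lt_succ_self k))
      have hna : ¬ IsAbsorbing C (augTraj C Δt τ x k) := h k (Nat.lt_succ_self k)
      show (if IsAbsorbing C (augTraj C Δt τ x k) then augTraj C Δt τ x k
        else ((augTraj C Δt τ x k).1 - Δt, x (k + 1))) = _
      rw [if_neg hna, hk]
      simp only [Prod.mk.injEq]
      refine ⟨by push_cast; ring, trivial⟩

/-- Once absorbing, the trajectory is frozen. -/
lemma augTraj_frozen {𝒳 : Type*} (C : Set 𝒳) (Δt τ : ℝ) (x : ℕ → 𝒳) {j : ℕ}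
    (habs : IsAbsorbing C (augTraj C Δt τ x j)) :
    ∀ k, j ≤ k → augTraj C Δt τ x k = augTraj C Δt τ x j := by
  intro k hk
  induction k, hk using Nat.le_induction with
  | base => rfl
  | succ k hk ih =>
      show (if IsAbsorbing C (augTraj C Δt τ x k) then augTraj C Δt τ x k
        else ((augTraj C Δt τ x k).1 - Δt, x (k + 1))) = _
      rw [ih, if_pos (ih ▸ habs)]

/-- The pathwise identity underlying the expectation identity. -/
lemma pathwise_sum {𝒳 : Type*} [MetricSpace 𝒳] (C : Set 𝒳) (Δt τ ε : ℝ)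
    (hΔt : 0 < Δt) (hτ : 0 ≤ τ) (x : ℕ → 𝒳) :
    (∑' k : ℕ, rewardEps C Δt ε (augTraj C Δt τ x k)) =
      (∏ k ∈ Finset.range (⌊τ / Δt⌋₊ + 1), (if x k ∈ C then (1 : ℝ) else 0)) *
        molPayoff C ε (x ⌊τ / Δt⌋₊) := by
  set N := ⌊τ / Δt⌋₊ with hN
  set S := augTraj C Δt τ x with hS
  have hNτ : (N : ℝ) * Δt ≤ τ := by
    have := Nat.floor_le (div_nonneg hτ hΔt.le)
    calc (N : ℝ) * Δt ≤ (τ / Δt) * Δt := by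
          exact mul_le_mul_of_nonneg_right this hΔt.le
      _ = τ := div_mul_cancel₀ τ hΔt.ne'
  have hτN : τ < ((N : ℝ) + 1) * Δt := by
    have := Nat.lt_floor_add_one (τ / Δt)
    have := (div_lt_iff₀ hΔt).mp this
    simpa using this
  -- the summand vanishes for k ≠ N
  have hzero : ∀ k : ℕ, k ≠ N → rewardEps C Δt ε (S k) = 0 := by
    intro k hk
    by_cases habs : ∃ j ≤ k, IsAbsorbing C (S j)
    · obtain ⟨j, hj, habs⟩ := habs
      have : IsAbsorbing C (S k) := by
        show IsAbsorbing C (augTraj C Δt τ x k)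
        rw [augTraj_frozen C Δt τ x habs k hj]; exact habs
      simp [rewardEps, this]
    · push_neg at habs
      have hform : S k = (τ - k * Δt, x k) :=
        augTraj_eq_of_not_absorbing C Δt τ x k fun j hj => habs j hj.le
      have : ¬ (0 ≤ (S k).1 ∧ (S k).1 < Δt) := by
        rw [hform]
        rintro ⟨h1, h2⟩
        dsimp only at h1 h2
        apply hk
        have hk1 : k ≤ N := by
          rw [hN]
          apply Nat.le_floor
          rw [le_div_iff₀ hΔt]
          linarith
        have hk2 : N ≤ k := by
          have hlt : N < k + 1 := by
            rw [hN]
            refine (Nat.floor_lt (div_nonneg hτ hΔt.le)).mpr ?_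
            rw [div_lt_iff₀ hΔt]; push_cast; linarith
          exact Nat.lt_succ_iff.mp hlt
        exact le_antisymm hk1 hk2
      simp [rewardEps, this]
  rw [tsum_eq_single N hzero]
  by_cases habs : ∃ j ≤ N, IsAbsorbing C (S j)
  · -- absorption before or at N: both sides are 0
    have hex : ∃ j, IsAbsorbing C (S j) := habs.imp fun j h => h.2
    set j := Nat.find hex with hj
    have hjabs : IsAbsorbing C (S j) := Nat.find_spec hex
    have hjmin : ∀ i < j, ¬ IsAbsorbing C (S i) := fun i hi => Nat.find_min hex hi
    have hjN : j ≤ N := by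
      obtain ⟨j0, hj0, habs0⟩ := habs
      exact (Nat.find_le habs0).trans hj0
    have hform : S j = (τ - j * Δt, x j) :=
      augTraj_eq_of_not_absorbing C Δt τ x j hjmin
    have hxj : x j ∉ C := by
      rcases hjabs with h | h
      · exfalso
        rw [hform] at h
        have : (j : ℝ) * Δt ≤ (N : ℝ) * Δt := by
          exact mul_le_mul_of_nonneg_right (by exact_mod_cast hjN) hΔt.le
        simp only at h
        linarith
      · rwa [hform] at h
    have habsN : IsAbsorbing C (S N) := by
      show IsAbsorbing C (augTraj C Δt τ x N)
      rw [augTraj_frozen C Δt τ x hjabs N hjN]; exact hjabs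
    have hL : rewardEps C Δt ε (S N) = 0 := by simp [rewardEps, habsN]
    have hR : (∏ k ∈ Finset.range (N + 1), (if x k ∈ C then (1 : ℝ) else 0)) = 0 :=
      Finset.prod_eq_zero (Finset.mem_range.mpr (Nat.lt_succ_of_le hjN)) (if_neg hxj)
    rw [hL, hR, zero_mul]
  · -- no absorption up to N
    push_neg at habs
    have hform : S N = (τ - N * Δt, x N) :=
      augTraj_eq_of_not_absorbing C Δt τ x N fun i hi => habs i hi.le
    have hformi : ∀ i ≤ N, S i = (τ - i * Δt, x i) := fun i hi =>
      augTraj_eq_of_not_absorbing C Δt τ x i fun m hm => habs m (hm.le.trans hi)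
    have hxC : ∀ i ≤ N, x i ∈ C := by
      intro i hi
      have := habs i hi
      rw [hformi i hi] at this
      simp only [IsAbsorbing, not_or, not_not] at this
      exact this.2
    have hprod : (∏ k ∈ Finset.range (N + 1), (if x k ∈ C then (1 : ℝ) else 0)) = 1 := by
      apply Finset.prod_eq_one
      intro i hi
      exact if_pos (hxC i (Nat.lt_succ_iff.mp (Finset.mem_range.mp hi)))
    have hexp : ((N : ℝ) + 1) * Δt = N * Δt + Δt := by ring
    have h1 : (0 : ℝ) ≤ τ - N * Δt ∧ τ - N * Δt < Δt := ⟨by linarith, by linarith⟩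
    have h2 : ¬ IsAbsorbing C ((τ - (N : ℝ) * Δt, x N)) := by
      rw [← hform]; exact habs N le_rfl
    rw [hprod, one_mul]
    show rewardEps C Δt ε (augTraj C Δt τ x N) = _
    rw [show augTraj C Δt τ x N = (τ - (N : ℝ) * Δt, x N) from hform]
    unfold rewardEps
    rw [if_pos h1, if_pos h2, one_mul, one_mul]

/-- ε-mollified expectation identity, the ε-analogue of
Proposition 1: assuming `l_ε` Borel measurable and `C` Borel,
`E[Σ_k r_ε(S_k)] = E[(∏_{k=0}^N 𝟙[X_k ∈ C]) · l_ε(X_N)]`, with `N = ⌊τ/Δt⌋`. -/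
theorem stmt_18 {Ω : Type*} [MeasurableSpace Ω] (P : Measure Ω) [IsProbabilityMeasure P]
    {𝒳 : Type*} [MetricSpace 𝒳] [MeasurableSpace 𝒳] [BorelSpace 𝒳]
    (X : ℕ → Ω → 𝒳) (hX : ∀ k, Measurable (X k))
    (C : Set 𝒳) (hC : MeasurableSet C) (Δt τ ε : ℝ)
    (hΔt : 0 < Δt) (hτ : 0 ≤ τ) (hε : 0 < ε)
    (hl : Measurable (molPayoff C ε)) :
    ∫ ω, (∑' k : ℕ, rewardEps C Δt ε (augTraj C Δt τ (fun n => X n ω) k)) ∂P =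
      ∫ ω, (∏ k ∈ Finset.range (⌊τ / Δt⌋₊ + 1), (if X k ω ∈ C then (1 : ℝ) else 0)) *
        molPayoff C ε (X ⌊τ / Δt⌋₊ ω) ∂P := by
  refine integral_congr_ae (Filter.Eventually.of_forall fun ω => ?_)
  exact pathwise_sum C Δt τ ε hΔt hτ (fun n => X n ω)
end
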